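/- arXiv:math/0409320 — 2 statements merged into one kernel-verified Lean document; each statement's English description precedes it below -/
import Mathlib

section
/- Let φ be a k-density on M and ω_k any Hilbert form for φ. Let N ⊂ M be an oriented k-submanifold with tangent lift Ñ = {(x,a) ∈ S_φ TM : span(a) = T_x N (oriented)}. Then ∫_N φ = ∫_{Ñ} ω_k. -/
/-!
STATEMENT 10: Let `φ` be a `k`-density on `M` and `ω_k` any Hilbert form for `φ`
(associated to a Legendre map `L`).  Let `N ⊂ M` be an oriented `k`-submanifold with
tangent lift `Ñ ⊂ S_φ TM`.  Then `∫_N φ = ∫_{Ñ} ω_k`.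

Model: `M` is (an open piece of) a normed space `V`; `N` is parametrised by a smooth
embedding `F` of a measurable set `U ⊆ ℝ^k`; its tangent frame is
`u ↦ (∂₁F(u), …, ∂_kF(u))`, and the tangent lift is `u ↦ (F u, a u)` where `a u` is
the positive rescaling of the tangent frame with `φ (F u) (a u) = 1` (first frame
vector scaled by `s u > 0`).  The left-hand side is the chartwise integral of the
density; the right-hand side is the integral over `U` of the pull-back of `ω_k` by the
tangent lift, whose value at `u` is `L_{F u}(a u)(∂₁F(u), …, ∂_kF(u))`.
-/

open scoped BigOperators

theorem integral_density_eq_integral_hilbert_form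
    {V : Type*} [NormedAddCommGroup V] [NormedSpace ℝ V] [FiniteDimensional ℝ V]
    {k : ℕ} (hk : 0 < k)
    (φ : V → (Fin k → V) → ℝ)
    (L : V → (Fin k → V) → (V [⋀^Fin k]→ₗ[ℝ] ℝ))
    -- homogeneity of the density in the `k`-vector slot:
    (hφhom : ∀ x (a : Fin k → V) (t : ℝ),
      φ x (Function.update a ⟨0, hk⟩ (t • a ⟨0, hk⟩)) = |t| * φ x a)
    (hφpos : ∀ x a, LinearIndependent ℝ a → 0 < φ x a)
    -- normalisation of the Legendre map:
    (hLeval : ∀ x a, L x a a = (φ x a) ^ 2)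
    -- the parametrised submanifold `N`:
    (U : Set (Fin k → ℝ)) (hU : MeasurableSet U)
    (F : (Fin k → ℝ) → V) (hF : ContDiff ℝ (⊤ : ℕ∞) F) (hFinj : Set.InjOn F U)
    (himm : ∀ u ∈ U, LinearIndependent ℝ (fun i => fderiv ℝ F u (Pi.single i 1)))
    -- the tangent lift `u ↦ (F u, a u)`:
    (s : (Fin k → ℝ) → ℝ) (hs : ∀ u ∈ U, 0 < s u)
    (a : (Fin k → ℝ) → (Fin k → V))
    (ha : ∀ u ∈ U, a u = Function.update (fun i => fderiv ℝ F u (Pi.single i 1))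
      ⟨0, hk⟩ (s u • fderiv ℝ F u (Pi.single (⟨0, hk⟩ : Fin k) 1)))
    (haunit : ∀ u ∈ U, φ (F u) (a u) = 1) :
    ∫ u in U, φ (F u) (fun i => fderiv ℝ F u (Pi.single i 1)) =
      ∫ u in U, L (F u) (a u) (fun i => fderiv ℝ F u (Pi.single i 1)) := by
  apply MeasureTheory.setIntegral_congr_fun hU
  intro u hu
  set b : Fin k → V := fun i => fderiv ℝ F u (Pi.single i 1) with hb
  have hs' := hs u hu
  have hphi : s u * φ (F u) b = 1 := by
    have := haunit u hu
    rw [ha u hu] at this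
    have h2 := hφhom (F u) b (s u)
    rw [abs_of_pos hs'] at h2
    rw [h2] at this
    exact this
  have hL : s u * L (F u) (a u) b = 1 := by
    have h3 : L (F u) (a u) (a u) = 1 := by
      rw [hLeval, haunit u hu]; norm_num
    nth_rewrite 2 [ha u hu] at h3
    have h4 : (L (F u) (a u)) (Function.update b ⟨0, hk⟩ (s u • b ⟨0, hk⟩))
        = s u • (L (F u) (a u)) (Function.update b ⟨0, hk⟩ (b ⟨0, hk⟩)) :=
      (L (F u) (a u)).map_update_smul b ⟨0, hk⟩ (s u) (b ⟨0, hk⟩)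
    rw [Function.update_eq_self] at h4
    rw [h4] at h3
    exact h3
  have hsne : s u ≠ 0 := ne_of_gt hs'
  have e1 : φ (F u) b = (s u)⁻¹ := by field_simp at hphi ⊢; linarith
  have e2 : L (F u) (a u) b = (s u)⁻¹ := by field_simp at hL ⊢; linarith
  exact e1.trans e2.symm
end

section
/- In Euclidean R³ with the standard area 2-density, identify Λ²TR³ with TR³ via the cross product. For a regular surface f(r,s) with unit normal n and tangent lift f̃ = (f,n), the mean curvature covector, computed as the restriction to the unit bundle of dω₂( · ∧ (∂_r f̃ ∧ ∂_s f̃)/|∂_r f ∧ ∂_s f| ), equals h = −H·⟨n, ·⟩ where H is the (scalar) mean curvature of f, i.e., minus the trace of the differential of the Gauss map. -/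
/-!
STATEMENT 14: In Euclidean `ℝ³` with the standard area 2-density, identify `Λ²Tℝ³`
with `Tℝ³` via the cross product.  For a regular surface `f(r,s)` with unit normal
`n` and tangent lift `f̃ = (f, n)`, the mean curvature covector, computed as the
restriction to the unit bundle of `dω₂(· ∧ (∂_r f̃ ∧ ∂_s f̃)/|∂_r f ∧ ∂_s f|)`,
equals `h = −M·⟨n, ·⟩`, where `M` is the scalar mean curvature (minus the trace of
the differential of the Gauss map).

The Hilbert 2-form is `ω₂ at (x,v) applied to (Y,Z) = ⟨v, Dπ Y × Dπ Z⟩` (i.e. the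
restriction of `v₁ dx₂∧dx₃ + v₂ dx₃∧dx₁ + v₃ dx₁∧dx₂`), and `dω₂` is computed on
constant vector fields.  All data is taken at one point: `fr, fs` are the partials
of `f`; `nr, ns` those of `n`, written `∂_r n = α ∂_r f + β ∂_s f`,
`∂_s n = γ ∂_r f + δ ∂_s f`, so that `M = −(α + δ)`; `ũ = (u,w)` is a lift of `u`
tangent to the unit bundle (`⟨n,w⟩ = 0`); the contraction with the normalised tangent
2-vector of the lift is division by `‖fr × fs‖`.
-/

open scoped RealInnerProductSpace

noncomputable section

abbrev E3 := EuclideanSpace ℝ (Fin 3)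

/-- Cross product on Euclidean `ℝ³`. -/
def cross3 (a b : E3) : E3 :=
  (WithLp.equiv 2 (Fin 3 → ℝ)).symm
    (crossProduct ((WithLp.equiv 2 (Fin 3 → ℝ)) a) ((WithLp.equiv 2 (Fin 3 → ℝ)) b))

/-- The Hilbert 2-form of the Euclidean area density on `ℝ³` (ambiently extended). -/
def hilbertTwo (z : E3 × E3) (Y Z : E3 × E3) : ℝ := ⟪z.2, cross3 Y.1 Z.1⟫

/-- Exterior derivative of a 2-form on constant vector fields. -/
def dTwo (ω : E3 × E3 → E3 × E3 → E3 × E3 → ℝ) (z X Y Z : E3 × E3) : ℝ :=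
  fderiv ℝ (fun y => ω y Y Z) z X - fderiv ℝ (fun y => ω y X Z) z Y +
    fderiv ℝ (fun y => ω y X Y) z Z

/-!
The Hilbert form is linear in the fibre variable, so on constant vector fields `dω₂` only
differentiates in the fibre directions:
`dω₂(ũ, f̃_r, f̃_s) = ⟨w, f_r × f_s⟩ + ⟨u, n_r × f_s + f_r × n_s⟩`.
The first term vanishes since `w ⊥ n`, and as the cross product is bilinear and alternating,
`n_r × f_s + f_r × n_s = (α + δ) f_r × f_s = -M ‖f_r × f_s‖ n`.
-/

open scoped Matrix

lemma fderiv_inner_snd_apply {E F : Type*} [NormedAddCommGroup E] [NormedSpace ℝ E]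
    [NormedAddCommGroup F] [InnerProductSpace ℝ F] (c : F) (z X : E × F) :
    fderiv ℝ (fun y : E × F => ⟪y.2, c⟫) z X = ⟪X.2, c⟫ := by
  rw [fderiv_inner_apply ℝ differentiableAt_snd (differentiableAt_const c)]
  simp [fderiv_snd]

lemma dTwo_hilbertTwo (z X Y Z : E3 × E3) :
    dTwo hilbertTwo z X Y Z =
      ⟪X.2, cross3 Y.1 Z.1⟫ - ⟪Y.2, cross3 X.1 Z.1⟫ + ⟪Z.2, cross3 X.1 Y.1⟫ := by
  simp only [dTwo, hilbertTwo, fderiv_inner_snd_apply]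

lemma inner_cross3 (a b c : E3) : ⟪a, cross3 b c⟫ = a.ofLp ⬝ᵥ b.ofLp ⨯₃ c.ofLp := by
  rw [EuclideanSpace.inner_eq_star_dotProduct, dotProduct_comm]
  rfl

lemma inner_cross3_cycle (a b c : E3) : ⟪a, cross3 b c⟫ = ⟪b, cross3 c a⟫ := by
  rw [inner_cross3, inner_cross3, triple_product_permutation]

lemma cross3_anticomm (a b : E3) : cross3 b a = -cross3 a b := by
  rw [cross3, cross3, ← cross_anticomm]
  rfl

lemma LinearMap.map_lincomb_add_map_lincomb_eq_trace_smul {R M N : Type*} [CommSemiring R]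
    [AddCommMonoid M] [Module R M] [AddCommMonoid N] [Module R N] (B : M →ₗ[R] M →ₗ[R] N)
    (hB : ∀ v, B v v = 0) (a b : M) (α β γ δ : R) :
    B (α • a + β • b) b + B a (γ • a + δ • b) = (α + δ) • B a b := by
  simp only [map_add, map_smul, LinearMap.add_apply, LinearMap.smul_apply, hB]
  module

lemma cross3_lincomb (a b : E3) (α β γ δ : ℝ) :
    cross3 (α • a + β • b) b + cross3 a (γ • a + δ • b) = (α + δ) • cross3 a b := by
  have h := (crossProduct (R := ℝ)).map_lincomb_add_map_lincomb_eq_trace_smul cross_self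
    a.ofLp b.ofLp α β γ δ
  simpa [cross3] using congrArg (WithLp.toLp 2) h

theorem mean_curvature_covector_of_surface_in_R3_general
    (x fr fs nr ns : E3) (α β γ δ : ℝ)
    (n : E3) (hn : n = ‖cross3 fr fs‖⁻¹ • cross3 fr fs)   -- the unit normal
    (hnr : nr = α • fr + β • fs)                 -- differential of the Gauss map
    (hns : ns = γ • fr + δ • fs)
    (M : ℝ) (hM : M = -(α + δ))                  -- the scalar mean curvature
    (u w : E3) (hw : ⟪n, w⟫ = 0) :               -- a lift of `u` tangent to the unit bundle
    ‖cross3 fr fs‖⁻¹ *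
        dTwo hilbertTwo (x, n) (u, w) (fr, nr) (fs, ns) = -M * ⟪n, u⟫ := by
  have hshape : ⟪u, cross3 nr fs + cross3 fr ns⟫ = (α + δ) * ⟪u, cross3 fr fs⟫ := by
    rw [hnr, hns, cross3_lincomb, real_inner_smul_right]
  have hd : dTwo hilbertTwo (x, n) (u, w) (fr, nr) (fs, ns) =
      ⟪cross3 fr fs, w⟫ + ⟪u, cross3 nr fs + cross3 fr ns⟫ := by
    rw [dTwo_hilbertTwo, inner_cross3_cycle nr, inner_cross3_cycle ns, cross3_anticomm nr,
      inner_add_right, inner_neg_right, real_inner_comm w]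
    ring
  rw [hn, real_inner_smul_left] at hw
  rw [hd, hshape, hM, hn, real_inner_smul_left, real_inner_comm u]
  linear_combination hw

theorem mean_curvature_covector_of_surface_in_R3
    (x fr fs nr ns : E3) (α β γ δ : ℝ)
    (hreg : cross3 fr fs ≠ 0)                    -- regularity of the surface
    (n : E3) (hn : n = ‖cross3 fr fs‖⁻¹ • cross3 fr fs)   -- the unit normal
    (hnr : nr = α • fr + β • fs)                 -- differential of the Gauss map
    (hns : ns = γ • fr + δ • fs)
    (M : ℝ) (hM : M = -(α + δ))                  -- the scalar mean curvature
    (u w : E3) (hw : ⟪n, w⟫ = 0) :               -- a lift of `u` tangent to the unit bundle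
    ‖cross3 fr fs‖⁻¹ *
        dTwo hilbertTwo (x, n) (u, w) (fr, nr) (fs, ns) = -M * ⟪n, u⟫ :=
  mean_curvature_covector_of_surface_in_R3_general x fr fs nr ns α β γ δ n hn hnr hns M hM u w hw
end
end
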